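/- arXiv:2203.15658 — 6 statements merged into one kernel-verified Lean document; each statement's English description precedes it below -/
import Mathlib

section
/- Let T be the weighted shift on l² with weights (a_j). Then the mean transform M(T) is the weighted shift with weights m_j = ζ_j (|a_j| + |a_{j+1}|)/2, where ζ_j = 0 if a_j = 0 and ζ_j = a_j/|a_j| otherwise. -/
noncomputable section

/-- The Hilbert space `ℓ²(ℕ, ℂ)`. -/
abbrev Ell2 := lp (fun _ : ℕ => ℂ) 2

/-- The canonical orthonormal basis of `ℓ²` (indexed from `0`; the paper's index `j ≥ 1`
corresponds to our index `j - 1`). -/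
noncomputable def e (j : ℕ) : Ell2 := lp.single 2 j 1

/-- `T` is an `m`-isometry: `∑_{k=0}^m (-1)^k C(m,k) ‖T^k x‖² = 0` for all `x`. -/
def IsMIsometry (T : Ell2 →L[ℂ] Ell2) (m : ℕ) : Prop :=
  ∀ x : Ell2,
    ∑ k ∈ Finset.range (m + 1), (-1 : ℝ) ^ k * (m.choose k : ℝ) * ‖(T ^ k) x‖ ^ 2 = 0

/-- the mean transform `M(T) = (|T|V + V|T|)/2` of a weighted shift with
weights `(a_j)` is the weighted shift with weights `ζ_j (|a_j| + |a_{j+1}|)/2`. -/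
theorem mean_transform_of_weighted_shift
    (a : ℕ → ℂ) (T V R : Ell2 →L[ℂ] Ell2)
    (hT : ∀ j, T (e j) = a j • e (j + 1))
    (hV : ∀ j, V (e j) = (if a j = 0 then 0 else a j / (‖a j‖ : ℂ)) • e (j + 1))
    (hR : ∀ j, R (e j) = (‖a j‖ : ℂ) • e j) :
    ∀ j, ((1 / 2 : ℂ) • (R ∘L V + V ∘L R)) (e j) =
      ((if a j = 0 then 0 else a j / (‖a j‖ : ℂ)) * (((‖a j‖ + ‖a (j + 1)‖) / 2 : ℝ) : ℂ))
        • e (j + 1) := by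
  intro j
  simp only [ContinuousLinearMap.smul_apply, ContinuousLinearMap.add_apply,
    ContinuousLinearMap.coe_comp', Function.comp_apply, hV, hR, map_smul, hV, hR]
  by_cases h : a j = 0
  · simp [h]
  · simp only [h, if_neg]
    push_cast
    ring_nf
    rw [smul_smul, smul_smul, ← add_smul, smul_smul]
    congr 1
    ring
end
end

section
/- Let T be the weighted shift on l² with weights (a_j) which is not an isometry. Then T is a 2-isometry if and only if there exists a real number a > -1 such that |a_j| = sqrt((j+1+a)/(j+a)) for all j ≥ 1. -/
noncomputable section

lemma e_orthonormal : Orthonormal ℂ e := by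
  rw [orthonormal_iff_ite]
  intro i j
  rw [e, e, lp.inner_single_left]
  simp only [RCLike.inner_apply, map_one, one_mul]
  rw [lp.single_apply]
  split_ifs with h
  · simp [h]
  · simp [h]

lemma norm_e (j : ℕ) : ‖e j‖ = 1 := e_orthonormal.1 j

lemma dense_span_e : Dense ((Submodule.span ℂ (Set.range e) : Submodule ℂ Ell2) : Set Ell2) := by
  intro f
  have h := lp.hasSum_single (p := 2) (by norm_num) f
  refine mem_closure_of_tendsto h (Filter.Eventually.of_forall fun s => ?_)
  refine Submodule.sum_mem _ fun i _ => ?_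
  have : lp.single 2 i (f i) = f i • e i := by
    rw [e, ← lp.single_smul]; norm_num
  rw [this]
  exact Submodule.smul_mem _ _ (Submodule.subset_span ⟨i, rfl⟩)

lemma norm_sq_comb (b : ℕ → ℂ) (g : ℕ → ℕ) (hg : Function.Injective g) (s : Finset ℕ) :
    ‖∑ j ∈ s, b j • e (g j)‖ ^ 2 = ∑ j ∈ s, ‖b j‖ ^ 2 := by
  have h := (e_orthonormal.comp g hg).inner_sum b b s
  rw [Function.comp_def] at h
  rw [inner_self_eq_norm_sq_to_K] at h
  have : ∀ j ∈ s, (starRingEnd ℂ) (b j) * b j = ((‖b j‖ ^ 2 : ℝ) : ℂ) := by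
    intro j _; rw [RCLike.conj_mul]; norm_cast
  rw [Finset.sum_congr rfl this, ← Complex.ofReal_sum] at h
  norm_cast at h
  exact Complex.ofReal_injective h

variable (a : ℕ → ℂ) (T : Ell2 →L[ℂ] Ell2)

lemma T_comb (hT : ∀ j, T (e j) = a j • e (j + 1)) (b : ℕ → ℂ) (s : Finset ℕ) :
    T (∑ j ∈ s, b j • e j) = ∑ j ∈ s, (b j * a j) • e (j + 1) := by
  rw [map_sum]
  refine Finset.sum_congr rfl fun j _ => ?_
  rw [map_smul, hT, smul_smul]

lemma T2_comb (hT : ∀ j, T (e j) = a j • e (j + 1)) (b : ℕ → ℂ) (s : Finset ℕ) :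
    T (T (∑ j ∈ s, b j • e j)) = ∑ j ∈ s, (b j * a j * a (j + 1)) • e (j + 2) := by
  rw [T_comb a T hT, map_sum]
  refine Finset.sum_congr rfl fun j _ => ?_
  rw [map_smul, hT, smul_smul]

lemma norms_comb (hT : ∀ j, T (e j) = a j • e (j + 1)) (b : ℕ → ℂ) (s : Finset ℕ) :
    ‖∑ j ∈ s, b j • e j‖ ^ 2 = ∑ j ∈ s, ‖b j‖ ^ 2
    ∧ ‖T (∑ j ∈ s, b j • e j)‖ ^ 2 = ∑ j ∈ s, ‖b j‖ ^ 2 * ‖a j‖ ^ 2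
    ∧ ‖T (T (∑ j ∈ s, b j • e j))‖ ^ 2
        = ∑ j ∈ s, ‖b j‖ ^ 2 * (‖a j‖ ^ 2 * ‖a (j + 1)‖ ^ 2) := by
  refine ⟨norm_sq_comb b id Function.injective_id s, ?_, ?_⟩
  · rw [T_comb a T hT, norm_sq_comb _ _ (add_left_injective 1) s]
    exact Finset.sum_congr rfl fun j _ => by rw [norm_mul, mul_pow]
  · rw [T2_comb a T hT, norm_sq_comb _ _ (add_left_injective 2) s]
    exact Finset.sum_congr rfl fun j _ => by rw [norm_mul, norm_mul, mul_pow, mul_pow]; ring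

/-- If all weights have norm 1, T is an isometry. -/
lemma isometry_of_norm_one (hT : ∀ j, T (e j) = a j • e (j + 1))
    (h : ∀ j, ‖a j‖ = 1) : ∀ x : Ell2, ‖T x‖ = ‖x‖ := by
  have key : (fun x : Ell2 => ‖T x‖) = fun x => ‖x‖ := by
    refine Continuous.ext_on dense_span_e (T.continuous.norm) continuous_norm ?_
    intro x hx
    obtain ⟨c, rfl⟩ := Finsupp.mem_span_range_iff_exists_finsupp.mp hx
    rw [Finsupp.sum]
    obtain ⟨h1, h2, -⟩ := norms_comb a T hT c c.support
    have : ‖T (∑ j ∈ c.support, c j • e j)‖ ^ 2 = ‖∑ j ∈ c.support, c j • e j‖ ^ 2 := by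
      rw [h1, h2]
      exact Finset.sum_congr rfl fun j _ => by rw [h j]; ring
    calc ‖T (∑ j ∈ c.support, c j • e j)‖
        = Real.sqrt (‖T (∑ j ∈ c.support, c j • e j)‖ ^ 2) := (Real.sqrt_sq (norm_nonneg _)).symm
      _ = Real.sqrt (‖∑ j ∈ c.support, c j • e j‖ ^ 2) := by rw [this]
      _ = _ := Real.sqrt_sq (norm_nonneg _)
  exact fun x => congrFun key x

/-- If the weights satisfy the scalar 2-isometry recursion, T is a 2-isometry. -/
lemma two_isometry_of_rec (hT : ∀ j, T (e j) = a j • e (j + 1))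
    (h : ∀ j, ‖a j‖ ^ 2 * ‖a (j + 1)‖ ^ 2 - 2 * ‖a j‖ ^ 2 + 1 = 0) :
    ∀ x : Ell2, ‖T (T x)‖ ^ 2 - 2 * ‖T x‖ ^ 2 + ‖x‖ ^ 2 = 0 := by
  have key : (fun x : Ell2 => ‖T (T x)‖ ^ 2 - 2 * ‖T x‖ ^ 2 + ‖x‖ ^ 2)
      = fun _ => (0 : ℝ) := by
    refine Continuous.ext_on dense_span_e (by fun_prop) continuous_const ?_
    intro x hx
    obtain ⟨c, rfl⟩ := Finsupp.mem_span_range_iff_exists_finsupp.mp hx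
    rw [Finsupp.sum]
    obtain ⟨h1, h2, h3⟩ := norms_comb a T hT c c.support
    simp only [h1, h2, h3]
    rw [Finset.mul_sum, ← Finset.sum_sub_distrib, ← Finset.sum_add_distrib]
    refine Finset.sum_eq_zero fun j _ => ?_
    have := h j
    nlinarith [this]
  exact fun x => congrFun key x

lemma isM2_iff : IsMIsometry T 2 ↔ ∀ x, ‖T (T x)‖ ^ 2 - 2 * ‖T x‖ ^ 2 + ‖x‖ ^ 2 = 0 := by
  unfold IsMIsometry
  constructor <;> intro h x <;> have h' := h x <;>
    simp only [Finset.sum_range_succ, Finset.sum_range_zero, pow_zero, pow_one, pow_succ,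
      ContinuousLinearMap.mul_apply, ContinuousLinearMap.one_apply, Nat.choose_zero_right,
      Nat.choose_one_right, Nat.choose_self, Nat.cast_one, Nat.cast_ofNat, one_mul, mul_one,
      neg_mul, neg_neg, zero_add] at h' ⊢ <;> linarith

/-- a non-isometric weighted shift is a `2`-isometry iff its weights are
`|a_j| = √((j+1+a)/(j+a))` for some `a > -1` (paper index `j ≥ 1`; our index `j` starts
at `0` and corresponds to the paper's `j + 1`). -/
theorem weighted_shift_two_isometry_iff
    (a : ℕ → ℂ) (T : Ell2 →L[ℂ] Ell2)
    (hT : ∀ j, T (e j) = a j • e (j + 1))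
    (hTnotiso : ¬ ∀ x : Ell2, ‖T x‖ = ‖x‖) :
    IsMIsometry T 2 ↔
      ∃ c : ℝ, -1 < c ∧ ∀ j : ℕ,
        ‖a j‖ = Real.sqrt (((j : ℝ) + 2 + c) / ((j : ℝ) + 1 + c)) := by
  rw [isM2_iff]
  constructor
  · intro h
    -- scalar recursion
    have hsrec : ∀ j, ‖a j‖ ^ 2 * ‖a (j + 1)‖ ^ 2 - 2 * ‖a j‖ ^ 2 + 1 = 0 := by
      intro j
      have h1 : ‖T (e j)‖ = ‖a j‖ := by rw [hT, norm_smul, norm_e, mul_one]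
      have h2 : ‖T (T (e j))‖ = ‖a j‖ * ‖a (j + 1)‖ := by
        rw [hT, map_smul, hT, norm_smul, norm_smul, norm_e, mul_one]
      have := h (e j)
      rw [h1, h2, norm_e, mul_pow] at this
      linarith
    have hpos : ∀ j, 0 < ‖a j‖ ^ 2 := by
      intro j
      rcases lt_or_eq_of_le (sq_nonneg ‖a j‖) with h' | h'
      · exact h'
      · exfalso; nlinarith [hsrec j]
    set u : ℕ → ℝ := fun j => ∏ i ∈ Finset.range j, ‖a i‖ ^ 2 with hu
    have husucc : ∀ j, u (j + 1) = u j * ‖a j‖ ^ 2 := fun j => Finset.prod_range_succ _ j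
    have hupos : ∀ j, 0 < u j := fun j => Finset.prod_pos fun i _ => hpos i
    have hurec : ∀ j, u (j + 2) = 2 * u (j + 1) - u j := by
      intro j
      rw [husucc (j + 1), husucc j]
      nlinarith [hsrec j, hupos j]
    set d : ℝ := ‖a 0‖ ^ 2 - 1 with hd
    have hulin : ∀ j, u j = 1 + j * d := by
      have key : ∀ j : ℕ, u j = 1 + j * d ∧ u (j + 1) = 1 + (j + 1 : ℕ) * d := by
        intro j
        induction j with
        | zero => refine ⟨by simp [hu], ?_⟩; rw [husucc 0]; simp [hu, hd]
        | succ n ih =>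
          refine ⟨ih.2, ?_⟩
          rw [hurec n, ih.1, ih.2]
          push_cast
          ring
      exact fun j => (key j).1
    have hd0 : 0 ≤ d := by
      by_contra hdneg
      push_neg at hdneg
      obtain ⟨n, hn⟩ := exists_nat_gt (1 / (-d))
      have h1 : (1 : ℝ) < n * (-d) := (div_lt_iff₀ (neg_pos.mpr hdneg)).mp hn
      have h2 := hupos n
      rw [hulin n] at h2
      linarith
    have hdne : d ≠ 0 := by
      intro hd0'
      apply hTnotiso
      refine isometry_of_norm_one a T hT fun j => ?_
      have h1 : u j * ‖a j‖ ^ 2 = u (j + 1) := (husucc j).symm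
      rw [hulin j, hulin (j + 1), hd0'] at h1
      simp only [mul_zero, add_zero, one_mul] at h1
      rw [← Real.sqrt_sq (norm_nonneg (a j)), h1, Real.sqrt_one]
    have hdpos : 0 < d := lt_of_le_of_ne hd0 (Ne.symm hdne)
    refine ⟨1 / d - 1, by have := one_div_pos.mpr hdpos; linarith, fun j => ?_⟩
    rw [← Real.sqrt_sq (norm_nonneg (a j))]
    congr 1
    have h1 : u j * ‖a j‖ ^ 2 = u (j + 1) := (husucc j).symm
    rw [hulin j, hulin (j + 1)] at h1
    have hden : (0 : ℝ) < (j : ℝ) + 1 + (1 / d - 1) := by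
      have hx := one_div_pos.mpr hdpos
      have hy : (0:ℝ) ≤ (j:ℝ) := Nat.cast_nonneg j
      linarith
    rw [eq_div_iff (ne_of_gt hden)]
    push_cast at h1
    set S := ‖a j‖ ^ 2 with hS
    field_simp
    linear_combination h1
  · rintro ⟨c, hc, hf⟩
    have hden : ∀ j : ℕ, (0 : ℝ) < (j : ℝ) + 1 + c := by
      intro j
      have : (0:ℝ) ≤ (j:ℝ) := Nat.cast_nonneg j
      linarith
    have hs : ∀ j : ℕ, ‖a j‖ ^ 2 = ((j : ℝ) + 2 + c) / ((j : ℝ) + 1 + c) := by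
      intro j
      rw [hf j, Real.sq_sqrt]
      have h1 := hden j
      have h2 := hden (j + 1)
      push_cast at h2
      exact div_nonneg (by linarith) (by linarith)
    refine two_isometry_of_rec a T hT fun j => ?_
    rw [hs j, hs (j + 1)]
    have h1 := hden j
    have h2 := hden (j + 1)
    have h3 := hden (j + 2)
    push_cast at h2 h3 ⊢
    field_simp
    ring
end
end

section
/- Fix λ ∈ (0,1) and x > 0. If the sequence a_j = x^{((λ-1)/λ)^j} satisfies a_j^{1-λ} a_{j+1}^{λ} = 1 for all j ≥ 1, so the λ-Aluthge transform of the associated weighted shift is the unilateral shift. Moreover, there exists x ∈ (0,1) such that 1 - 2a_1² + a_1² a_2² ≠ 0, i.e., the associated weighted shift is not a 2-isometry although its λ-Aluthge transform is an isometry. -/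
/-- for `λ ∈ (0,1)`, the sequence `a_j = x^{((λ-1)/λ)^j}` (for `x > 0`)
satisfies `a_j^{1-λ} a_{j+1}^λ = 1` for all `j ≥ 1`, so the `λ`-Aluthge transform of the
associated weighted shift is the unilateral shift; moreover there is `x ∈ (0,1)` with
`1 - 2 a_1² + a_1² a_2² ≠ 0`, i.e. the associated weighted shift is not a `2`-isometry
although its `λ`-Aluthge transform is an isometry. -/
theorem counterexample_lambda_aluthge_isometry
    (l : ℝ) (hl : l ∈ Set.Ioo (0 : ℝ) 1) :
    (∀ x : ℝ, 0 < x → ∀ j : ℕ, 1 ≤ j →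
        (x ^ (((l - 1) / l) ^ j)) ^ (1 - l) * (x ^ (((l - 1) / l) ^ (j + 1))) ^ l = 1) ∧
      ∃ x ∈ Set.Ioo (0 : ℝ) 1,
        1 - 2 * (x ^ (((l - 1) / l) ^ 1)) ^ 2
          + (x ^ (((l - 1) / l) ^ 1)) ^ 2 * (x ^ (((l - 1) / l) ^ 2)) ^ 2 ≠ 0 := by
  obtain ⟨hl0, hl1⟩ := hl
  have hlne : l ≠ 0 := ne_of_gt hl0
  have hc : (l - 1) / l < 0 := div_neg_of_neg_of_pos (by linarith) hl0
  constructor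
  · intro x hx j _
    rw [← Real.rpow_mul hx.le, ← Real.rpow_mul hx.le, ← Real.rpow_add hx]
    have he : ((l - 1) / l) ^ j * (1 - l) + ((l - 1) / l) ^ (j + 1) * l = 0 := by
      rw [pow_succ]
      field_simp
      ring
    rw [he, Real.rpow_zero]
  · refine ⟨1/2, ⟨by norm_num, by norm_num⟩, ?_⟩
    have hhalf : (0:ℝ) < 1/2 := by norm_num
    have hA : 1 < (1/2 : ℝ) ^ (((l - 1) / l) ^ 1) := by
      rw [Real.one_lt_rpow_iff_of_pos hhalf]
      right
      constructor
      · norm_num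
      · simpa using hc
    have hB0 : 0 < (1/2 : ℝ) ^ (((l - 1) / l) ^ 2) := Real.rpow_pos_of_pos hhalf _
    have hB : (1/2 : ℝ) ^ (((l - 1) / l) ^ 2) < 1 := by
      rw [Real.rpow_lt_one_iff_of_pos hhalf]
      right
      constructor
      · norm_num
      · exact pow_pos (neg_pos.mpr hc) 2 |>.trans_eq (by ring_nf)
    set a := (1/2 : ℝ) ^ (((l - 1) / l) ^ 1) with ha
    set b := (1/2 : ℝ) ^ (((l - 1) / l) ^ 2) with hb
    have h1 : 1 < a ^ 2 := by nlinarith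
    have h2 : b ^ 2 < 1 := by nlinarith
    have h3 : (0:ℝ) < a ^ 2 := by positivity
    nlinarith [mul_lt_mul_of_pos_left h2 h3]
end

section
/- Let λ ∈ (0,1) and m ≥ 2. The function f defined on {z : Re(z) > -1/(m+1)} by f(z) = 1 + Σ_{k=1}^m (-1)^k C(m,k) (1+kz)^{1-λ} ((1+(k+1)z)/(1+z))^{λ} (using principal branches) is holomorphic and does not vanish identically; in particular f(1/n) ≠ 0 for some integer n ≥ 1. -/
/-!
If `f (1 / n) = 0` for every `n ≥ 1`, the identity theorem makes `f` vanish on the whole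
half-plane, in particular at every real `x > 0`. Substituting `z = 1 / u` with `u > 0` gives
`u ^ (1 - λ) f (1 / u) = u ^ (1 - λ) + Ψ u`, where `Ψ` (`aluthgeTail`) is holomorphic at `0`.
So `‖Ψ u‖ = u ^ (1 - λ)` for all `u > 0`; as `0 < 1 - λ < 1`, no function differentiable at `0`
behaves like this: continuity forces `Ψ 0 = 0`, and then `u ^ (1 - λ) = O(u)`, which fails.
-/

open Complex Filter Topology

lemma not_eventually_norm_eq_rpow {E : Type*} [NormedAddCommGroup E] [NormedSpace ℝ E]
    {g : ℝ → E} (hg : DifferentiableAt ℝ g 0) {s : ℝ} (hs0 : 0 < s) (hs1 : s < 1) :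
    ¬ ∀ᶠ u in 𝓝[>] 0, ‖g u‖ = u ^ s := by
  intro h
  have hg0 : g 0 = 0 := by
    have hnorm : Tendsto (fun u => ‖g u‖) (𝓝[>] 0) (𝓝 ‖g 0‖) :=
      hg.continuousAt.norm.tendsto.mono_left nhdsWithin_le_nhds
    have hrpow : Tendsto (fun u : ℝ => u ^ s) (𝓝[>] 0) (𝓝 0) := by
      simpa [Real.zero_rpow hs0.ne'] using
        (Real.continuousAt_rpow_const 0 s (Or.inr hs0.le)).tendsto.mono_left nhdsWithin_le_nhds
    exact norm_eq_zero.mp (tendsto_nhds_unique hnorm (hrpow.congr' (h.mono fun u hu => hu.symm)))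
  obtain ⟨C, hC⟩ := hg.hasFDerivAt.isBigO_sub.bound
  have hbounded : ∀ᶠ u in 𝓝[>] 0, u ^ (s - 1) ≤ C := by
    filter_upwards [h, nhdsWithin_le_nhds hC, self_mem_nhdsWithin] with u hu hCu (hu0 : 0 < u)
    rw [Real.rpow_sub_one hu0.ne', div_le_iff₀ hu0, ← hu]
    simpa [hg0, abs_of_pos hu0] using hCu
  obtain ⟨u, hle, hlt⟩ :=
    (hbounded.and ((tendsto_rpow_neg_nhdsGT_zero (sub_neg.mpr hs1)).eventually_gt_atTop C)).exists
  exact hle.not_gt hlt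

lemma eqOn_zero_of_forall_one_div_natCast {𝕜 E : Type*} [RCLike 𝕜] [NormedAddCommGroup E]
    [NormedSpace 𝕜 E] {f : 𝕜 → E} {U : Set 𝕜} (hf : AnalyticOnNhd 𝕜 f U)
    (hU : IsPreconnected U) (h0 : 0 ∈ U) (hzero : ∀ n : ℕ, 1 ≤ n → f (1 / n) = 0) :
    Set.EqOn f 0 U := by
  refine hf.eqOn_zero_of_preconnected_of_frequently_eq_zero hU h0 ?_
  have htend : Tendsto (fun n : ℕ => 1 / (n : 𝕜)) atTop (𝓝[≠] 0) :=
    tendsto_nhdsWithin_of_tendsto_nhds_of_eventually_within _ tendsto_one_div_atTop_nhds_zero_nat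
      (eventually_atTop.mpr ⟨1, fun n hn => by simp; omega⟩)
  exact htend.frequently (eventually_atTop.mpr ⟨1, hzero⟩).frequently

lemma div_mem_slitPlane_of_re_pos {a b : ℂ} (ha : 0 < a.re) (hb : 0 < b.re) :
    a / b ∈ slitPlane := by
  rw [mem_slitPlane_iff, or_iff_not_imp_right, not_not]
  intro him
  have hb0 : b ≠ 0 := fun h => by simp [h] at hb
  have hre : a.re = (a / b).re * b.re := by
    conv_lhs => rw [← div_mul_cancel₀ a hb0]
    simp [mul_re, him]
  nlinarith

lemma one_add_natCast_mul_re_pos {m c : ℕ} {z : ℂ} (hc : c ≤ m + 1)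
    (hz : -1 / ((m : ℝ) + 1) < z.re) : 0 < (1 + (c : ℂ) * z).re := by
  have hm : (0 : ℝ) < m + 1 := by positivity
  have hc' : (c : ℝ) ≤ m + 1 := by exact_mod_cast hc
  have hmz : -1 < ((m : ℝ) + 1) * z.re := by rwa [div_lt_iff₀' hm] at hz
  have hre : (1 + (c : ℂ) * z).re = 1 + c * z.re := by simp
  rw [hre]
  rcases le_or_gt 0 z.re with h | h
  · positivity
  · nlinarith

noncomputable def aluthgeFun (m : ℕ) (l : ℝ) (z : ℂ) : ℂ :=
  1 + ∑ k ∈ Finset.Icc 1 m,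
    (-1 : ℂ) ^ k * (m.choose k : ℂ) * (1 + (k : ℂ) * z) ^ ((1 : ℂ) - (l : ℂ)) *
      ((1 + ((k : ℂ) + 1) * z) / (1 + z)) ^ (l : ℂ)

noncomputable def aluthgeTail (m : ℕ) (l : ℝ) (u : ℂ) : ℂ :=
  ∑ k ∈ Finset.Icc 1 m,
    (-1 : ℂ) ^ k * (m.choose k : ℂ) * (u + k) ^ ((1 : ℂ) - (l : ℂ)) *
      ((u + k + 1) / (u + 1)) ^ (l : ℂ)

lemma differentiableAt_aluthgeFun (m : ℕ) (l : ℝ) {z : ℂ}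
    (hz : -1 / ((m : ℝ) + 1) < z.re) : DifferentiableAt ℂ (aluthgeFun m l) z := by
  have hre : ∀ c ≤ m + 1, 0 < (1 + (c : ℂ) * z).re := fun c hc =>
    one_add_natCast_mul_re_pos hc hz
  have h1 : 0 < (1 + z).re := by simpa using hre 1 (by omega)
  have h1' : 1 + z ≠ 0 := fun h => by simp [h] at h1
  unfold aluthgeFun
  refine (differentiableAt_const _).add (DifferentiableAt.fun_sum fun k hk => ?_)
  have hkm : k ≤ m := (Finset.mem_Icc.mp hk).2
  have hk1 : 0 < (1 + ((k : ℂ) + 1) * z).re := by exact_mod_cast hre (k + 1) (by omega)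
  refine (((differentiableAt_const _).mul (differentiableAt_const _)).mul ?_).mul ?_
  · exact (by fun_prop : DifferentiableAt ℂ (fun w : ℂ => 1 + (k : ℂ) * w) z).cpow_const
      (mem_slitPlane_iff.mpr (Or.inl (hre k (by omega))))
  · exact (by fun_prop : DifferentiableAt ℂ (fun w : ℂ => (1 + ((k : ℂ) + 1) * w) / (1 + w)) z
      ).cpow_const (div_mem_slitPlane_of_re_pos hk1 h1)

lemma differentiableAt_aluthgeTail_zero (m : ℕ) (l : ℝ) :
    DifferentiableAt ℂ (aluthgeTail m l) 0 := by
  unfold aluthgeTail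
  refine DifferentiableAt.fun_sum fun k hk => ?_
  have hk : k ≠ 0 := by have := (Finset.mem_Icc.mp hk).1; omega
  refine (((differentiableAt_const _).mul (differentiableAt_const _)).mul ?_).mul ?_
  · exact (by fun_prop : DifferentiableAt ℂ (fun u : ℂ => u + k) 0).cpow_const
      (by simpa using natCast_mem_slitPlane.mpr hk)
  · refine (by fun_prop (disch := norm_num) :
      DifferentiableAt ℂ (fun u : ℂ => (u + k + 1) / (u + 1)) 0).cpow_const ?_
    simpa using natCast_mem_slitPlane.mpr (Nat.succ_ne_zero k)

lemma ofReal_cpow_mul_aluthgeFun_one_div (m : ℕ) (l : ℝ) {u : ℝ} (hu : 0 < u) :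
    (u : ℂ) ^ ((1 : ℂ) - l) * aluthgeFun m l (1 / u) =
      (u : ℂ) ^ ((1 : ℂ) - l) + aluthgeTail m l u := by
  unfold aluthgeFun aluthgeTail
  rw [mul_add, mul_one, Finset.mul_sum]
  congr 1
  refine Finset.sum_congr rfl fun k _ => ?_
  have hu' : (u : ℂ) ≠ 0 := by exact_mod_cast hu.ne'
  have hcast : 1 + (k : ℂ) * (1 / u) = ((1 + k / u : ℝ) : ℂ) := by push_cast; ring
  have hsplit : (u : ℂ) + k = (u : ℂ) * ((1 + k / u : ℝ) : ℂ) := by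
    rw [← hcast]
    field_simp
  have hratio : (1 + ((k : ℂ) + 1) * (1 / u)) / (1 + 1 / u) = ((u : ℂ) + k + 1) / (u + 1) := by
    field_simp
    ring
  rw [hcast, hratio, hsplit, mul_cpow_ofReal_nonneg hu.le (by positivity)]
  ring

lemma exists_pos_aluthgeFun_ne_zero (m : ℕ) {l : ℝ} (hl : l ∈ Set.Ioo 0 1) :
    ∃ x : ℝ, 0 < x ∧ aluthgeFun m l x ≠ 0 := by
  by_contra! h
  have htail : DifferentiableAt ℝ (fun u : ℝ => aluthgeTail m l u) 0 := by
    have := (differentiableAt_aluthgeTail_zero m l).hasDerivAt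
    rw [← ofReal_zero] at this
    exact this.comp_ofReal.differentiableAt
  refine not_eventually_norm_eq_rpow htail (sub_pos.mpr hl.2) (sub_lt_self 1 hl.1) ?_
  filter_upwards [self_mem_nhdsWithin] with u (hu : 0 < u)
  have hidentity := ofReal_cpow_mul_aluthgeFun_one_div m l hu
  rw [← ofReal_one, ← ofReal_div, h _ (by positivity), mul_zero] at hidentity
  rw [eq_neg_of_add_eq_zero_right hidentity.symm, norm_neg, norm_cpow_eq_rpow_re_of_pos hu]
  simp

theorem aluthge_auxiliary_function_not_identically_zero_general
    (l : ℝ) (hl : l ∈ Set.Ioo (0 : ℝ) 1) (m : ℕ)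
    (f : ℂ → ℂ)
    (hf : ∀ z : ℂ, f z = 1 + ∑ k ∈ Finset.Icc 1 m,
      (-1 : ℂ) ^ k * (m.choose k : ℂ) * (1 + (k : ℂ) * z) ^ ((1 : ℂ) - (l : ℂ)) *
        ((1 + ((k : ℂ) + 1) * z) / (1 + z)) ^ (l : ℂ)) :
    DifferentiableOn ℂ f {z : ℂ | -1 / ((m : ℝ) + 1) < z.re} ∧
      ¬ (∀ z ∈ {z : ℂ | -1 / ((m : ℝ) + 1) < z.re}, f z = 0) ∧
      ∃ n : ℕ, 1 ≤ n ∧ f (1 / (n : ℂ)) ≠ 0 := by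
  obtain rfl : f = aluthgeFun m l := funext hf
  have hdiff : DifferentiableOn ℂ (aluthgeFun m l) {z : ℂ | -1 / ((m : ℝ) + 1) < z.re} :=
    fun z hz => (differentiableAt_aluthgeFun m l hz).differentiableWithinAt
  have hmem : ∀ x : ℝ, 0 ≤ x → (x : ℂ) ∈ {z : ℂ | -1 / ((m : ℝ) + 1) < z.re} := fun x hx => by
    have : -1 / ((m : ℝ) + 1) < 0 := div_neg_of_neg_of_pos (by norm_num) (by positivity)
    simp only [Set.mem_ofPred_eq, ofReal_re]
    linarith
  have hexists : ∃ n : ℕ, 1 ≤ n ∧ aluthgeFun m l (1 / n) ≠ 0 := by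
    by_contra! hzero
    obtain ⟨x, hx, hfx⟩ := exists_pos_aluthgeFun_ne_zero m hl
    exact hfx (eqOn_zero_of_forall_one_div_natCast
      (hdiff.analyticOnNhd (isOpen_lt continuous_const continuous_re))
      (convex_halfSpace_re_gt _).isPreconnected (by simpa using hmem 0 le_rfl) hzero
      (hmem x hx.le))
  refine ⟨hdiff, fun hall => ?_, hexists⟩
  obtain ⟨n, -, hn⟩ := hexists
  exact hn (hall _ (by simpa using hmem (1 / n) (by positivity)))

/-- for `λ ∈ (0,1)` and `m ≥ 2`, the function
`f(z) = 1 + ∑_{k=1}^m (-1)^k C(m,k) (1+kz)^{1-λ} ((1+(k+1)z)/(1+z))^λ`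
(principal branches) is holomorphic on `{z : Re z > -1/(m+1)}` and does not vanish
identically there; in particular `f(1/n) ≠ 0` for some integer `n ≥ 1`. -/
theorem aluthge_auxiliary_function_not_identically_zero
    (l : ℝ) (hl : l ∈ Set.Ioo (0 : ℝ) 1) (m : ℕ) (hm : 2 ≤ m)
    (f : ℂ → ℂ)
    (hf : ∀ z : ℂ, f z = 1 + ∑ k ∈ Finset.Icc 1 m,
      (-1 : ℂ) ^ k * (m.choose k : ℂ) * (1 + (k : ℂ) * z) ^ ((1 : ℂ) - (l : ℂ)) *
        ((1 + ((k : ℂ) + 1) * z) / (1 + z)) ^ (l : ℂ)) :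
    DifferentiableOn ℂ f {z : ℂ | -1 / ((m : ℝ) + 1) < z.re} ∧
      ¬ (∀ z ∈ {z : ℂ | -1 / ((m : ℝ) + 1) < z.re}, f z = 0) ∧
      ∃ n : ℕ, 1 ≤ n ∧ f (1 / (n : ℂ)) ≠ 0 :=
  aluthge_auxiliary_function_not_identically_zero_general l hl m f hf
end

section
/- There exists a bounded operator T on l² which is similar to a contraction but such that M(T) is not power bounded (i.e., sup_n ‖M(T)^n‖ = ∞). -/
noncomputable section

/-- A continuous linear map is a partial isometry if it is isometric on the orthogonal
complement of its kernel. -/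
def IsPartialIsometry (V : Ell2 →L[ℂ] Ell2) : Prop :=
  ∀ x ∈ (LinearMap.ker (V : Ell2 →ₗ[ℂ] Ell2))ᗮ, ‖V x‖ = ‖x‖

namespace MTAux

open scoped ComplexConjugate ENNReal NNReal
open ContinuousLinearMap

local notation "⟪" x ", " y "⟫" => @inner ℂ _ _ x y

lemma p2pos : (0 : ℝ) < (2 : ℝ≥0∞).toReal := by norm_num

lemma rpow_two' (x : ℝ) : x ^ (2 : ℝ≥0∞).toReal = x ^ 2 := by
  rw [show (2 : ℝ≥0∞).toReal = ((2 : ℕ) : ℝ) by norm_num, Real.rpow_natCast]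

/-! ### Diagonal operators -/

def diagFun (w : ℕ → ℝ) (f : ∀ _ : ℕ, ℂ) : ∀ _ : ℕ, ℂ := fun n => (w n : ℂ) * f n

lemma diag_mem {w : ℕ → ℝ} {C : ℝ} (hw : ∀ n, |w n| ≤ C) (f : Ell2) :
    Memℓp (diagFun w f) 2 := by
  apply memℓp_gen
  have hf : Summable fun n => ‖f n‖ ^ (2 : ℝ≥0∞).toReal := (lp.memℓp f).summable p2pos
  refine Summable.of_nonneg_of_le (fun n => ?_) (fun n => ?_) (hf.mul_left (C ^ 2))
  · exact Real.rpow_nonneg (norm_nonneg _) _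
  · rw [rpow_two', rpow_two']
    have h1 : ‖diagFun w f n‖ = |w n| * ‖f n‖ := by
      simp [diagFun, Complex.norm_real, abs_mul]
    rw [h1, mul_pow]
    have h2 : |w n| ^ 2 ≤ C ^ 2 :=
      pow_le_pow_left₀ (abs_nonneg _) (hw n) 2
    exact mul_le_mul_of_nonneg_right h2 (by positivity)

def diagLM (w : ℕ → ℝ) {C : ℝ} (hw : ∀ n, |w n| ≤ C) : Ell2 →ₗ[ℂ] Ell2 where
  toFun f := ⟨diagFun w f, diag_mem hw f⟩
  map_add' f g := by
    ext n
    simp [diagFun, mul_add]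
    rfl
  map_smul' c f := by
    ext n
    simp [diagFun]
    ring

lemma diag_norm_le {w : ℕ → ℝ} {C : ℝ} (hC : 0 ≤ C) (hw : ∀ n, |w n| ≤ C) (f : Ell2) :
    ‖diagLM w hw f‖ ≤ C * ‖f‖ := by
  apply lp.norm_le_of_tsum_le p2pos (mul_nonneg hC (norm_nonneg f))
  have hsumf : Summable fun n => ‖f n‖ ^ (2 : ℝ≥0∞).toReal := (lp.memℓp f).summable p2pos
  have hle : ∀ n, ‖(diagLM w hw f) n‖ ^ (2 : ℝ≥0∞).toReal
      ≤ C ^ 2 * ‖f n‖ ^ (2 : ℝ≥0∞).toReal := by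
    intro n
    rw [rpow_two', rpow_two']
    have h1 : ‖(diagLM w hw f) n‖ = |w n| * ‖f n‖ := by
      simp [diagLM, diagFun, Complex.norm_real, abs_mul]
    rw [h1, mul_pow]
    exact mul_le_mul_of_nonneg_right (pow_le_pow_left₀ (abs_nonneg _) (hw n) 2) (by positivity)
  calc ∑' n, ‖(diagLM w hw f) n‖ ^ (2 : ℝ≥0∞).toReal
      ≤ ∑' n, C ^ 2 * ‖f n‖ ^ (2 : ℝ≥0∞).toReal := by
        refine Summable.tsum_le_tsum hle ((lp.memℓp _).summable p2pos) (hsumf.mul_left _)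
    _ = C ^ 2 * ∑' n, ‖f n‖ ^ (2 : ℝ≥0∞).toReal := tsum_mul_left
    _ = C ^ 2 * ‖f‖ ^ (2 : ℝ≥0∞).toReal := by rw [lp.norm_rpow_eq_tsum p2pos]
    _ = (C * ‖f‖) ^ (2 : ℝ≥0∞).toReal := by rw [rpow_two', rpow_two', mul_pow]

def diagL (w : ℕ → ℝ) {C : ℝ} (hC : 0 ≤ C) (hw : ∀ n, |w n| ≤ C) : Ell2 →L[ℂ] Ell2 :=
  LinearMap.mkContinuous (diagLM w hw) C (diag_norm_le hC hw)

@[simp] lemma diagL_apply (w : ℕ → ℝ) {C : ℝ} (hC : 0 ≤ C) (hw : ∀ n, |w n| ≤ C)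
    (f : Ell2) (n : ℕ) : (diagL w hC hw f) n = (w n : ℂ) * f n := rfl

/-! ### The shift operator -/

def shiftFun (f : ∀ _ : ℕ, ℂ) : ∀ _ : ℕ, ℂ := fun n =>
  match n with
  | 0 => 0
  | Nat.succ m => f m

@[simp] lemma shiftFun_zero (f : ∀ _ : ℕ, ℂ) : shiftFun f 0 = 0 := rfl
@[simp] lemma shiftFun_succ (f : ∀ _ : ℕ, ℂ) (m : ℕ) : shiftFun f (m + 1) = f m := rfl

lemma shift_supp (f : ∀ _ : ℕ, ℂ) :
    ∀ n ∉ Set.range Nat.succ, ‖shiftFun f n‖ ^ (2 : ℝ≥0∞).toReal = 0 := by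
  intro n hn
  match n with
  | 0 => simp [Real.zero_rpow p2pos.ne']
  | Nat.succ m => exact absurd ⟨m, rfl⟩ hn

lemma shift_mem (f : Ell2) : Memℓp (shiftFun f) 2 := by
  apply memℓp_gen
  have := (lp.memℓp f).summable p2pos
  exact (Nat.succ_injective.summable_iff (shift_supp f)).1 this

def shiftLM : Ell2 →ₗ[ℂ] Ell2 where
  toFun f := ⟨shiftFun f, shift_mem f⟩
  map_add' f g := by
    ext n
    match n with
    | 0 => simp; exact (add_zero (0:ℂ)).symm
    | Nat.succ m => simp; rfl
  map_smul' c f := by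
    ext n
    match n with
    | 0 => simp
    | Nat.succ m => simp

lemma shiftLM_norm (f : Ell2) : ‖shiftLM f‖ = ‖f‖ := by
  rw [lp.norm_eq_tsum_rpow p2pos, lp.norm_eq_tsum_rpow p2pos]
  congr 1
  have hsupp : (Function.support fun n => ‖shiftFun f n‖ ^ (2 : ℝ≥0∞).toReal)
      ⊆ Set.range Nat.succ := by
    intro n hn
    by_contra h
    exact hn (shift_supp f n h)
  have := Nat.succ_injective.tsum_eq (f := fun n => ‖shiftFun f n‖ ^ (2 : ℝ≥0∞).toReal) hsupp
  exact this.symm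

def shiftL : Ell2 →L[ℂ] Ell2 :=
  LinearMap.mkContinuous shiftLM 1 fun f => by rw [shiftLM_norm, one_mul]

@[simp] lemma shiftL_apply (f : Ell2) (n : ℕ) : (shiftL f) n = shiftFun f n := rfl

lemma shiftL_norm (f : Ell2) : ‖shiftL f‖ = ‖f‖ := shiftLM_norm f

/-! ### The specific weights -/

def wR (n : ℕ) : ℝ := if Even n then 2 else 2⁻¹
def aR (n : ℕ) : ℝ := if Even n then 1 else 2⁻¹
def aR' (n : ℕ) : ℝ := if Even n then 1 else 2

lemma wR_bound (n : ℕ) : |wR n| ≤ 2 := by unfold wR; split_ifs <;> simp [abs_le] <;> norm_num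
lemma aR_bound (n : ℕ) : |aR n| ≤ 1 := by unfold aR; split_ifs <;> simp [abs_le] <;> norm_num
lemma aR'_bound (n : ℕ) : |aR' n| ≤ 2 := by unfold aR'; split_ifs <;> simp [abs_le] <;> norm_num

lemma wR_pos (n : ℕ) : 0 < wR n := by unfold wR; split_ifs <;> norm_num
lemma aR_mul_aR' (n : ℕ) : aR n * aR' n = 1 := by unfold aR aR'; split_ifs <;> norm_num
lemma not_even_succ {m : ℕ} (h : Even m) : ¬ Even (m + 1) := by
  simp [Nat.even_add_one, h]
lemma even_succ {m : ℕ} (h : ¬ Even m) : Even (m + 1) := by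
  simp [Nat.even_add_one, h]
lemma aR_succ_wR_aR' (m : ℕ) : aR (m + 1) * (wR m * aR' m) = 1 := by
  unfold aR aR' wR
  by_cases h : Even m
  · rw [if_pos h, if_pos h, if_neg (not_even_succ h)]
    norm_num
  · rw [if_neg h, if_neg h, if_pos (even_succ h)]
    norm_num
lemma wR_succ_add (m : ℕ) : wR (m + 1) + wR m = 5 / 2 := by
  unfold wR
  by_cases h : Even m
  · rw [if_pos h, if_neg (not_even_succ h)]; norm_num
  · rw [if_neg h, if_pos (even_succ h)]; norm_num

def D : Ell2 →L[ℂ] Ell2 := diagL wR (by norm_num) wR_bound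
def A : Ell2 →L[ℂ] Ell2 := diagL aR (by norm_num) aR_bound
def A' : Ell2 →L[ℂ] Ell2 := diagL aR' (by norm_num) aR'_bound
def S : Ell2 →L[ℂ] Ell2 := shiftL

@[simp] lemma D_apply (f : Ell2) (n : ℕ) : (D f) n = (wR n : ℂ) * f n := rfl
@[simp] lemma A_apply (f : Ell2) (n : ℕ) : (A f) n = (aR n : ℂ) * f n := rfl
@[simp] lemma A'_apply (f : Ell2) (n : ℕ) : (A' f) n = (aR' n : ℂ) * f n := rfl
@[simp] lemma S_apply_zero (f : Ell2) : (S f) 0 = 0 := rfl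
@[simp] lemma S_apply_succ (f : Ell2) (m : ℕ) : (S f) (m + 1) = f m := rfl

lemma S_norm (f : Ell2) : ‖S f‖ = ‖f‖ := shiftL_norm f

/-! ### Properties -/

lemma D_symmetric : (D : Ell2 →ₗ[ℂ] Ell2).IsSymmetric := by
  intro x y
  rw [lp.inner_eq_tsum, lp.inner_eq_tsum]
  apply tsum_congr
  intro n
  simp only [RCLike.inner_apply, ContinuousLinearMap.coe_coe, D_apply, map_mul,
    Complex.conj_ofReal]
  ring

lemma D_selfAdjoint : IsSelfAdjoint D :=
  ContinuousLinearMap.isSelfAdjoint_iff_isSymmetric.2 D_symmetric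

lemma D_positive : D.IsPositive := by
  refine ⟨D_symmetric, fun x => ?_⟩
  rw [ContinuousLinearMap.reApplyInnerSelf]
  have h : ⟪D x, x⟫ = ∑' n, ⟪(D x) n, x n⟫ := lp.inner_eq_tsum _ _
  have hsum : Summable fun n => ⟪(D x) n, x n⟫ := lp.summable_inner _ _
  have : RCLike.re ⟪D x, x⟫ = ∑' n, ((⟪(D x) n, x n⟫ : ℂ)).re := by
    rw [h]
    exact Complex.re_tsum hsum
  rw [this]
  apply tsum_nonneg
  intro n
  simp only [RCLike.inner_apply, D_apply, map_mul, Complex.conj_ofReal]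
  rw [mul_left_comm, Complex.mul_conj,
    ← Complex.ofReal_mul, Complex.ofReal_re]
  exact mul_nonneg (wR_pos n).le (Complex.normSq_nonneg _)

def T : Ell2 →L[ℂ] Ell2 := S ∘L D

@[simp] lemma T_apply_zero (f : Ell2) : (T f) 0 = 0 := rfl
@[simp] lemma T_apply_succ (f : Ell2) (m : ℕ) : (T f) (m + 1) = (wR m : ℂ) * f m := rfl

lemma T_inner (x y : Ell2) : ⟪T x, T y⟫ = ⟪(D ∘L D) x, y⟫ := by
  rw [lp.inner_eq_tsum, lp.inner_eq_tsum]
  have hsupp : (Function.support fun n => (⟪(T x) n, (T y) n⟫ : ℂ)) ⊆ Set.range Nat.succ := by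
    intro n hn
    match n with
    | 0 =>
      exfalso
      apply hn
      simp [RCLike.inner_apply]
    | Nat.succ m => exact ⟨m, rfl⟩
  rw [← Nat.succ_injective.tsum_eq hsupp]
  apply tsum_congr
  intro m
  simp only [RCLike.inner_apply, Nat.succ_eq_add_one, T_apply_succ,
    ContinuousLinearMap.comp_apply, D_apply, map_mul, Complex.conj_ofReal]
  ring

lemma adjT : ContinuousLinearMap.adjoint T ∘L T = D ∘L D := by
  refine ContinuousLinearMap.ext fun x => ?_
  refine ext_inner_right ℂ fun y => ?_
  rw [ContinuousLinearMap.comp_apply, ContinuousLinearMap.adjoint_inner_left]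
  exact T_inner x y

lemma ker_S : LinearMap.ker (S : Ell2 →ₗ[ℂ] Ell2) = ⊥ := by
  rw [Submodule.eq_bot_iff]
  intro x hx
  have hx' : S x = 0 := LinearMap.mem_ker.1 hx
  have : ‖x‖ = 0 := by rw [← S_norm, hx', norm_zero]
  exact norm_eq_zero.1 this

lemma ker_T : LinearMap.ker (T : Ell2 →ₗ[ℂ] Ell2) = ⊥ := by
  rw [Submodule.eq_bot_iff]
  intro x hx
  have hx' : T x = 0 := LinearMap.mem_ker.1 hx
  ext n
  have h : (T x) (n + 1) = 0 := by rw [hx']; rfl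
  rw [T_apply_succ] at h
  have hw : (wR n : ℂ) ≠ 0 := by exact_mod_cast (wR_pos n).ne'
  have := (mul_eq_zero.1 h).resolve_left hw
  simpa using this

def AU : (Ell2 →L[ℂ] Ell2)ˣ where
  val := A
  inv := A'
  val_inv := by
    refine ContinuousLinearMap.ext fun x => ?_
    rw [ContinuousLinearMap.mul_apply, ContinuousLinearMap.one_apply]
    ext n
    rw [A_apply, A'_apply, ← mul_assoc, ← Complex.ofReal_mul, aR_mul_aR',
      Complex.ofReal_one, one_mul]
  inv_val := by
    refine ContinuousLinearMap.ext fun x => ?_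
    rw [ContinuousLinearMap.mul_apply, ContinuousLinearMap.one_apply]
    ext n
    rw [A'_apply, A_apply, ← mul_assoc, ← Complex.ofReal_mul, mul_comm (aR' n) (aR n),
      aR_mul_aR', Complex.ofReal_one, one_mul]

lemma conj_T : (A : Ell2 →L[ℂ] Ell2) * T * A' = S := by
  refine ContinuousLinearMap.ext fun x => ?_
  ext n
  rw [ContinuousLinearMap.mul_apply, ContinuousLinearMap.mul_apply]
  cases n with
  | zero => simp
  | succ m =>
    rw [A_apply, T_apply_succ, A'_apply, S_apply_succ]
    have h : ((aR (m + 1) : ℂ)) * ((wR m : ℂ) * ((aR' m : ℂ) * x m))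
        = (((aR (m + 1) * (wR m * aR' m)) : ℝ) : ℂ) * x m := by
      push_cast
      ring
    rw [h, aR_succ_wR_aR', Complex.ofReal_one, one_mul]

lemma S_opnorm : ‖S‖ ≤ 1 :=
  ContinuousLinearMap.opNorm_le_bound _ zero_le_one fun x => by rw [S_norm, one_mul]

lemma M_eq : (1 / 2 : ℂ) • (D ∘L S + S ∘L D) = (((5 : ℝ) / 4 : ℝ) : ℂ) • S := by
  refine ContinuousLinearMap.ext fun x => ?_
  rw [ContinuousLinearMap.smul_apply, ContinuousLinearMap.smul_apply,
    ContinuousLinearMap.add_apply]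
  ext n
  rw [lp.coeFn_smul, lp.coeFn_smul, Pi.smul_apply, Pi.smul_apply, lp.coeFn_add, Pi.add_apply]
  cases n with
  | zero =>
    simp [ContinuousLinearMap.comp_apply]
  | succ m =>
    simp only [ContinuousLinearMap.comp_apply, D_apply, S_apply_succ, smul_eq_mul]
    rw [← add_mul, ← Complex.ofReal_add, wR_succ_add]
    push_cast
    ring

lemma Spow_norm (n : ℕ) : ∀ x : Ell2, ‖(S ^ n) x‖ = ‖x‖ := by
  induction n with
  | zero => intro x; simp
  | succ k ih =>
    intro x
    rw [pow_succ, ContinuousLinearMap.mul_apply, ih, S_norm]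

lemma norm_e0 : ‖e 0‖ = 1 := by
  have h := lp.norm_single (E := fun _ : ℕ => ℂ) (by norm_num : (0:ℝ≥0∞) < 2) 0 (1 : ℂ)
  simpa [e] using h

lemma Spow_opnorm_ge (n : ℕ) : (1 : ℝ) ≤ ‖S ^ n‖ := by
  have h2 := (S ^ n).le_opNorm (e 0)
  rw [Spow_norm, norm_e0, mul_one] at h2
  exact h2

end MTAux

/-- there is a bounded operator `T` on `ℓ²` which is similar to a contraction
but whose mean transform `M(T) = (|T|V + V|T|)/2` (with `T = V ∘ |T|` the polar
decomposition) is not power bounded. -/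
theorem exists_similar_to_contraction_mean_transform_not_power_bounded :
    ∃ T V R : Ell2 →L[ℂ] Ell2,
      T = V ∘L R ∧ R.IsPositive ∧ R ∘L R = ContinuousLinearMap.adjoint T ∘L T ∧
      LinearMap.ker (V : Ell2 →ₗ[ℂ] Ell2) = LinearMap.ker (T : Ell2 →ₗ[ℂ] Ell2) ∧ IsPartialIsometry V ∧
      (∃ A : (Ell2 →L[ℂ] Ell2)ˣ, ‖(A : Ell2 →L[ℂ] Ell2) * T * (↑A⁻¹ : Ell2 →L[ℂ] Ell2)‖ ≤ 1) ∧
      (∀ C : ℝ, ∃ n : ℕ, C < ‖((1 / 2 : ℂ) • (R ∘L V + V ∘L R)) ^ n‖) := by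
  refine ⟨MTAux.T, MTAux.S, MTAux.D, rfl, MTAux.D_positive, MTAux.adjT.symm,
    MTAux.ker_S.trans MTAux.ker_T.symm, fun x _ => MTAux.S_norm x, ⟨MTAux.AU, ?_⟩, ?_⟩
  · have h : ((MTAux.AU : Ell2 →L[ℂ] Ell2) * MTAux.T * (↑MTAux.AU⁻¹ : Ell2 →L[ℂ] Ell2))
        = MTAux.S := MTAux.conj_T
    rw [h]
    exact MTAux.S_opnorm
  · intro C
    obtain ⟨n, hn⟩ := pow_unbounded_of_one_lt C (show (1 : ℝ) < 5 / 4 by norm_num)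
    refine ⟨n, lt_of_lt_of_le hn ?_⟩
    rw [MTAux.M_eq]
    set c : ℂ := (((5 : ℝ) / 4 : ℝ) : ℂ) with hc
    have happ : ‖((c • MTAux.S) ^ n) (e 0)‖ = (5 / 4 : ℝ) ^ n := by
      rw [smul_pow, ContinuousLinearMap.smul_apply, norm_smul, norm_pow, hc,
        Complex.norm_real, MTAux.Spow_norm, MTAux.norm_e0, mul_one]
      norm_num [Real.norm_eq_abs, abs_of_nonneg]
    have hle := ((c • MTAux.S) ^ n).le_opNorm (e 0)
    rw [happ, MTAux.norm_e0, mul_one] at hle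
    exact hle
end
end

section
/- For λ ∈ [0,1], let u(s) = 2^{2s-1} 3^{1-s} + 2^{1-2s} 3^s + 4√3 for s ∈ [0,1]. Then u is decreasing on (0,1/2), increasing on (1/2,1), and 8 < 6√3 = u(1/2) ≤ u(λ) ≤ u(0) = 7/2 + 4√3; in particular u(λ) ≠ 8 for all λ ∈ [0,1]. -/
/-!
Writing every power as an exponential shows that `u(s) = 4√3 + 2√3 cosh (log (4/3) (s - 1/2))`.
Since `cosh` is even and strictly increasing on `[0, ∞)`, `u` decreases strictly up to `s = 1/2`,
increases strictly after it, and on `[0, 1]` it lies between `u(1/2) = 6√3 > 8` and `u(0) = u(1)`.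
-/

open Real Set

theorem two_rpow_mul_three_rpow_add_eq_cosh (s : ℝ) :
    (2 : ℝ) ^ (2 * s - 1) * (3 : ℝ) ^ (1 - s) + (2 : ℝ) ^ (1 - 2 * s) * (3 : ℝ) ^ s
      = 2 * √3 * cosh (log (4 / 3) * (s - 1 / 2)) := by
  have hlog : log (4 / 3 : ℝ) = 2 * log 2 - log 3 := by
    rw [log_div (by norm_num) (by norm_num), show (4 : ℝ) = 2 ^ 2 by norm_num, log_pow]
    push_cast
    ring
  have hsqrt : √3 = exp (log 3 * (1 / 2)) := by
    rw [sqrt_eq_rpow, rpow_def_of_pos (by norm_num)]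
  simp only [rpow_def_of_pos (show (0 : ℝ) < 2 by norm_num),
    rpow_def_of_pos (show (0 : ℝ) < 3 by norm_num), ← exp_add, cosh_eq, hsqrt, hlog]
  rw [mul_right_comm, mul_div_cancel₀ _ two_ne_zero, add_mul, ← exp_add, ← exp_add]
  congr 2 <;> ring

section CoshProfile

variable {a b c m : ℝ}

theorem strictAntiOn_add_mul_cosh_mul_sub (hb : 0 < b) (hc : 0 < c) :
    StrictAntiOn (fun s ↦ a + b * cosh (c * (s - m))) (Iic m) := by
  intro x hx y hy hxy
  have hcosh : cosh (c * (y - m)) < cosh (c * (x - m)) := by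
    rw [cosh_lt_cosh, abs_of_nonpos (mul_nonpos_of_nonneg_of_nonpos hc.le (sub_nonpos.2 hy)),
      abs_of_nonpos (mul_nonpos_of_nonneg_of_nonpos hc.le (sub_nonpos.2 hx))]
    nlinarith
  dsimp only
  gcongr

theorem strictMonoOn_add_mul_cosh_mul_sub (hb : 0 < b) (hc : 0 < c) :
    StrictMonoOn (fun s ↦ a + b * cosh (c * (s - m))) (Ici m) := by
  intro x hx y hy hxy
  have hcosh : cosh (c * (x - m)) < cosh (c * (y - m)) := by
    rw [cosh_lt_cosh, abs_of_nonneg (mul_nonneg hc.le (sub_nonneg.2 hx)),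
      abs_of_nonneg (mul_nonneg hc.le (sub_nonneg.2 hy))]
    nlinarith
  dsimp only
  gcongr

theorem add_mul_cosh_mul_sub_le_of_abs_le (hb : 0 ≤ b) {x y : ℝ} (h : |x - m| ≤ |y - m|) :
    a + b * cosh (c * (x - m)) ≤ a + b * cosh (c * (y - m)) := by
  have hcosh : cosh (c * (x - m)) ≤ cosh (c * (y - m)) := by
    rw [cosh_le_cosh, abs_mul, abs_mul]
    exact mul_le_mul_of_nonneg_left h (abs_nonneg c)
  gcongr

end CoshProfile

/-- the function `u(s) = 2^{2s-1} 3^{1-s} + 2^{1-2s} 3^s + 4√3` is strictly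
decreasing on `(0, 1/2)`, strictly increasing on `(1/2, 1)`, and satisfies
`8 < 6√3 = u(1/2) ≤ u(λ) ≤ u(0) = 7/2 + 4√3` for all `λ ∈ [0,1]`; in particular
`u(λ) ≠ 8` for all `λ ∈ [0,1]`. -/
theorem auxiliary_function_u_ne_eight
    (u : ℝ → ℝ)
    (hu : ∀ s : ℝ, u s =
      (2 : ℝ) ^ (2 * s - 1) * (3 : ℝ) ^ (1 - s) + (2 : ℝ) ^ (1 - 2 * s) * (3 : ℝ) ^ s
        + 4 * Real.sqrt 3) :
    StrictAntiOn u (Set.Ioo 0 (1 / 2)) ∧ StrictMonoOn u (Set.Ioo (1 / 2) 1) ∧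
      (8 : ℝ) < 6 * Real.sqrt 3 ∧ u (1 / 2) = 6 * Real.sqrt 3 ∧
      u 0 = 7 / 2 + 4 * Real.sqrt 3 ∧
      (∀ l ∈ Set.Icc (0 : ℝ) 1, u (1 / 2) ≤ u l ∧ u l ≤ u 0) ∧
      (∀ l ∈ Set.Icc (0 : ℝ) 1, u l ≠ 8) := by
  have hu0 : u 0 = 7 / 2 + 4 * √3 := by
    rw [hu]
    norm_num
  have hcosh : u = fun s ↦ 4 * √3 + 2 * √3 * cosh (log (4 / 3) * (s - 1 / 2)) := by
    funext s
    rw [hu, two_rpow_mul_three_rpow_add_eq_cosh, add_comm]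
  have hb : 0 < 2 * √3 := by positivity
  have hc : 0 < log (4 / 3 : ℝ) := log_pos (by norm_num)
  have h8 : (8 : ℝ) < 6 * √3 := by
    nlinarith [sq_sqrt (show (0 : ℝ) ≤ 3 by norm_num), sqrt_nonneg 3]
  have hhalf : u (1 / 2) = 6 * √3 := by
    rw [hcosh]
    norm_num
    ring
  have hbounds : ∀ l ∈ Icc (0 : ℝ) 1, u (1 / 2) ≤ u l ∧ u l ≤ u 0 := by
    intro l hl
    rw [hhalf, hcosh]
    refine ⟨by nlinarith [one_le_cosh (log (4 / 3) * (l - 1 / 2))],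
      add_mul_cosh_mul_sub_le_of_abs_le hb.le ?_⟩
    rw [abs_le, abs_of_neg (by norm_num)]
    constructor <;> linarith [hl.1, hl.2]
  refine ⟨?_, ?_, h8, hhalf, hu0, hbounds, fun l hl ↦ ?_⟩
  · rw [hcosh]
    exact (strictAntiOn_add_mul_cosh_mul_sub hb hc).mono fun x hx ↦ hx.2.le
  · rw [hcosh]
    exact (strictMonoOn_add_mul_cosh_mul_sub hb hc).mono fun x hx ↦ hx.1.le
  · linarith [(hbounds l hl).1]
end
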